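/- Let W be a real symmetric n×n matrix, and let p = (p_X, p_Y) be a permutation of the indices 1,...,n where p_X has size k, with associated permutation matrix P, so that PWPᵗ = [[A, B],[Bᵗ, C]] with A the k×k block. Assume A is invertible with spectral decomposition A = U_A Λ_A U_Aᵗ, and let Nᵏ be the n×k matrix with top block U_A and bottom block Bᵗ U_A Λ_A⁻¹. Let Wᵏ be the n×k matrix whose columns are the columns of W with indices in p_X. Then the orthogonal projectors onto the column spaces coincide: Wᵏ (Wᵏ)⁺ = (Pᵗ Nᵏ)(Pᵗ Nᵏ)⁺, where M⁺ denotes the Moore–Penrose pseudoinverse. -/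

import Mathlib

open Matrix
/-- The four Penrose conditions characterizing the Moore–Penrose pseudoinverse. -/
def IsMoorePenroseInv {α β : Type*} [Fintype α] [Fintype β]
    (M : Matrix α β ℝ) (G : Matrix β α ℝ) : Prop :=
  M * G * M = M ∧ G * M * G = G ∧ (M * G)ᵀ = M * G ∧ (G * M)ᵀ = G * M

/-- If two matrices have each other's column space (each is the other times something),
then their Moore–Penrose projectors agree. -/
theorem mp_proj_eq {α β : Type*} [Fintype α] [Fintype β] [DecidableEq β]
    (M N : Matrix α β ℝ) (S T : Matrix β β ℝ)
    (hMS : M = N * S) (hNT : N = M * T)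
    (G H : Matrix β α ℝ) (hG : IsMoorePenroseInv M G) (hH : IsMoorePenroseInv N H) :
    M * G = N * H := by
  obtain ⟨hG1, hG2, hG3, hG4⟩ := hG
  obtain ⟨hH1, hH2, hH3, hH4⟩ := hH
  have hNM : N * H * M = M := by
    calc N * H * M = N * H * N * S := by rw [hMS, Matrix.mul_assoc (N*H)]
    _ = N * S := by rw [hH1]
    _ = M := hMS.symm
  have hMN : M * G * N = N := by
    calc M * G * N = M * G * M * T := by rw [hNT, Matrix.mul_assoc (M*G)]
    _ = M * T := by rw [hG1]
    _ = N := hNT.symm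
  have h1 : N * H * (M * G) = M * G := by
    rw [← Matrix.mul_assoc, hNM]
  have h2 : M * G * (N * H) = N * H := by
    rw [← Matrix.mul_assoc, hMN]
  calc M * G = (M * G)ᵀ := hG3.symm
  _ = (N * H * (M * G))ᵀ := by rw [h1]
  _ = (M * G)ᵀ * (N * H)ᵀ := by rw [Matrix.transpose_mul]
  _ = M * G * (N * H) := by rw [hG3, hH3]
  _ = N * H := h2

/-- Proposition 1 of the paper: the orthogonal projector onto the column space of
`Wᵏ` (the columns of `W` indexed by the sample) coincides with the orthogonal
projector onto the column space of `Pᵗ Nᵏ` given by Nyström's method. -/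
theorem farthest_sampling_projection_eq
    {ι : Type*} [Fintype ι] [DecidableEq ι] (k m : ℕ)
    (W : Matrix ι ι ℝ) (hWsym : Wᵀ = W)
    -- the permutation `p = (p_X, p_Y)` sending the sample `p_X` (of size `k`) to the front
    (e : ι ≃ (Fin k ⊕ Fin m))
    (A : Matrix (Fin k) (Fin k) ℝ) (B : Matrix (Fin k) (Fin m) ℝ)
    (C : Matrix (Fin m) (Fin m) ℝ)
    -- `P W Pᵗ = [[A, B], [Bᵗ, C]]`
    (hblock : W.submatrix e.symm e.symm = Matrix.fromBlocks A B Bᵀ C)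
    (hA : IsUnit A.det)
    -- spectral decomposition `A = U_A Λ_A U_Aᵗ`
    (UA : Matrix (Fin k) (Fin k) ℝ) (lam : Fin k → ℝ)
    (hUorth : UAᵀ * UA = 1) (hUorth' : UA * UAᵀ = 1)
    (hlam : ∀ i, lam i ≠ 0)
    (hspec : A = UA * Matrix.diagonal lam * UAᵀ)
    -- `Nᵏ = [U_A ; Bᵗ U_A Λ_A⁻¹]`
    (Nk : Matrix (Fin k ⊕ Fin m) (Fin k) ℝ)
    (hNk : Nk = Matrix.fromRows UA (Bᵀ * UA * (Matrix.diagonal lam)⁻¹))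
    -- `Wᵏ` : the columns of `W` with indices in `p_X`
    (Wk : Matrix ι (Fin k) ℝ)
    (hWk : Wk = Matrix.of fun i r => W i (e.symm (Sum.inl r)))
    -- `Pᵗ Nᵏ`
    (PtNk : Matrix ι (Fin k) ℝ) (hPtNk : PtNk = Nk.submatrix e id)
    -- Moore–Penrose pseudoinverses
    (Gw : Matrix (Fin k) ι ℝ) (hGw : IsMoorePenroseInv Wk Gw)
    (GN : Matrix (Fin k) ι ℝ) (hGN : IsMoorePenroseInv PtNk GN) :
    Wk * Gw = PtNk * GN := by
  set D : Matrix (Fin k) (Fin k) ℝ := Matrix.diagonal lam with hD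
  have hDdet : IsUnit D.det := by
    rw [hD, Matrix.det_diagonal]
    exact isUnit_iff_ne_zero.mpr (Finset.prod_ne_zero_iff.mpr fun i _ => hlam i)
  have hDinv : D⁻¹ * D = 1 := Matrix.nonsing_inv_mul D hDdet
  have hDinv' : D * D⁻¹ = 1 := Matrix.mul_nonsing_inv D hDdet
  -- Wk as a submatrix of fromRows A Bᵀ
  have hWk' : Wk = (Matrix.fromRows A Bᵀ).submatrix e id := by
    rw [hWk]
    ext i r
    have := congrFun (congrFun hblock (e i)) (Sum.inl r)
    simp only [Matrix.submatrix_apply, Equiv.symm_apply_apply] at this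
    simp only [Matrix.of_apply, Matrix.submatrix_apply, id]
    rw [this]
    cases h : e i with
    | inl a => rfl
    | inr b => rfl
  -- Nk * (D * UAᵀ) = fromRows A Bᵀ
  have hNkS : Nk * (D * UAᵀ) = Matrix.fromRows A Bᵀ := by
    have h2 : Bᵀ * UA * D⁻¹ * (D * UAᵀ) = Bᵀ := by
      calc Bᵀ * UA * D⁻¹ * (D * UAᵀ) = Bᵀ * UA * (D⁻¹ * D) * UAᵀ := by
            simp only [Matrix.mul_assoc]
      _ = Bᵀ * (UA * UAᵀ) := by rw [hDinv, Matrix.mul_one, Matrix.mul_assoc]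
      _ = Bᵀ := by rw [hUorth', Matrix.mul_one]
    rw [hNk, Matrix.fromRows_mul, h2, ← Matrix.mul_assoc, ← hspec]
  have hMS : Wk = PtNk * (D * UAᵀ) := by
    rw [hWk', hPtNk, ← hNkS,
      Matrix.submatrix_mul Nk (D * UAᵀ) e id id Function.bijective_id]
    simp
  have hNT : PtNk = Wk * (UA * D⁻¹) := by
    rw [hMS]
    symm
    calc PtNk * (D * UAᵀ) * (UA * D⁻¹)
        = PtNk * (D * (UAᵀ * UA) * D⁻¹) := by simp only [Matrix.mul_assoc]
    _ = PtNk := by rw [hUorth, Matrix.mul_one, hDinv', Matrix.mul_one]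
  exact mp_proj_eq Wk PtNk (D * UAᵀ) (UA * D⁻¹) hMS hNT Gw GN hGw hGN
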